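/- For |q|<1, ∑_{k=0}^∞ (-1)^k q^{k(k+1)/2} = (q;q)_∞² · ∑_{k=0}^∞ q^k/(q;q)_k². -/

import Mathlib

noncomputable def qPoch (q : ℝ) (n : ℕ) : ℝ := ∏ j ∈ Finset.range n, (1 - q ^ (j + 1))

/-!
Write `e(x) = ∑ xⁿ/(q;q)ₙ` and `E(x) = ∑ (-1)ⁿ q^(n choose 2) xⁿ/(q;q)ₙ` (`qExp`, `qExpInv`).
Since `(1 - qⁿ)/(q;q)ₙ = 1/(q;q)ₙ₋₁`, shifting the index gives `e(qx) = (1 - x) e(x)` and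
`E(x) = (1 - x) E(qx)`.
Hence `e E` is invariant under `x ↦ qx`, so it equals its limit `1` at `0`, and iterating the
second relation gives Euler's product `E(x) = ∏ⱼ (1 - x qʲ)`; in particular `P := E(q) = (q;q)∞`
and `E(q^(k+1)) = P/(q;q)ₖ`. The right-hand side is therefore `∑ₖ (P qᵏ/(q;q)ₖ) E(q^(k+1))`.
Expanding `E` and summing over `k` first, the inner sum is
`(-1)ᵐ q^(m choose 2) qᵐ/(q;q)ₘ · P e(q^(m+1))`, and `P = (q;q)ₘ E(q^(m+1))` together with
`e E = 1` reduces it to `(-1)ᵐ q^(m(m+1)/2)`.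
-/

open Filter Topology Finset

section
variable {q : ℝ}

lemma one_sub_pow_succ_pos (hq : |q| < 1) (n : ℕ) : 0 < 1 - q ^ (n + 1) := by
  have : q ^ (n + 1) < 1 :=
    (le_abs_self _).trans_lt (by rw [abs_pow]; exact pow_lt_one₀ (abs_nonneg q) hq n.succ_ne_zero)
  linarith

lemma qPoch_zero : qPoch q 0 = 1 := prod_range_zero _

lemma qPoch_succ (n : ℕ) : qPoch q (n + 1) = qPoch q n * (1 - q ^ (n + 1)) :=
  prod_range_succ _ _

lemma qPoch_pos (hq : |q| < 1) (n : ℕ) : 0 < qPoch q n :=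
  prod_pos fun j _ => one_sub_pow_succ_pos hq j

lemma exists_inv_qPoch_le (hq : |q| < 1) : ∃ C, 0 ≤ C ∧ ∀ n, (qPoch q n)⁻¹ ≤ C := by
  have hlog : Summable fun j : ℕ => Real.log (1 - q ^ (j + 1)) := by
    simpa [sub_eq_add_neg, pow_succ'] using Real.summable_log_one_add_of_summable
      ((summable_geometric_of_abs_lt_one hq).mul_left q).neg
  have hprod := Real.hasProd_of_hasSum_log (one_sub_pow_succ_pos hq) hlog.hasSum
  obtain ⟨C, hC⟩ := (hprod.tendsto_prod_nat.inv₀ (Real.exp_pos _).ne').bddAbove_range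
  exact ⟨C, (hC ⟨0, rfl⟩).trans' (by simp), fun n => hC ⟨n, rfl⟩⟩

lemma abs_mul_pow_div_qPoch_le (hq : |q| < 1) {C a x : ℝ} (hC : ∀ n, (qPoch q n)⁻¹ ≤ C)
    (ha : |a| ≤ 1) (n : ℕ) : |a * x ^ n / qPoch q n| ≤ C * |x| ^ n := by
  calc |a * x ^ n / qPoch q n| = |a| * |x| ^ n * (qPoch q n)⁻¹ := by
        rw [abs_div, abs_mul, abs_pow, abs_of_pos (qPoch_pos hq n), div_eq_mul_inv]
    _ ≤ 1 * |x| ^ n * C := by gcongr; exacts [(inv_pos.2 (qPoch_pos hq n)).le, hC n]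
    _ = C * |x| ^ n := by ring

noncomputable def qSeries (q : ℝ) (a : ℕ → ℝ) (x : ℝ) : ℝ :=
  ∑' n, a n * x ^ n / qPoch q n

variable {a : ℕ → ℝ} {x : ℝ}

lemma summable_qSeries (hq : |q| < 1) (ha : ∀ n, |a n| ≤ 1) (hx : |x| < 1) :
    Summable fun n => a n * x ^ n / qPoch q n := by
  obtain ⟨C, -, hC⟩ := exists_inv_qPoch_le hq
  refine Summable.of_norm_bounded ((summable_geometric_of_lt_one (abs_nonneg x) hx).mul_left C)
    fun n => ?_
  exact abs_mul_pow_div_qPoch_le hq hC (ha n) n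

lemma tendsto_qSeries_nhds_zero (hq : |q| < 1) (ha : ∀ n, |a n| ≤ 1) :
    Tendsto (qSeries q a) (𝓝 0) (𝓝 (a 0)) := by
  obtain ⟨C, hC0, hC⟩ := exists_inv_qPoch_le hq
  have hlim : ∑' n, a n * (0 : ℝ) ^ n / qPoch q n = a 0 := by
    rw [tsum_eq_single 0 fun n hn => by simp [zero_pow hn]]
    simp [qPoch_zero]
  rw [← hlim]
  refine tendsto_tsum_of_dominated_convergence (bound := fun n => C * (1 / 2) ^ n)
    ((summable_geometric_two).mul_left C) (fun n => ?_) ?_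
  · exact ((continuous_pow n).const_mul (a n)).div_const _ |>.tendsto 0
  · filter_upwards [Metric.ball_mem_nhds (0 : ℝ) one_half_pos] with x hx n
    have hx : |x| ≤ 1 / 2 := by simpa using (Metric.mem_ball.1 hx).le
    exact (abs_mul_pow_div_qPoch_le hq hC (ha n) n).trans (by gcongr)

lemma abs_mul_pow_lt_one (hq : |q| < 1) (hx : |x| < 1) (k : ℕ) : |x * q ^ k| < 1 := by
  rw [abs_mul, abs_pow]
  exact (mul_le_of_le_one_right (abs_nonneg x) (pow_le_one₀ (abs_nonneg q) hq.le)).trans_lt hx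

lemma qSeries_sub_qSeries_q_mul (hq : |q| < 1) (ha : ∀ n, |a n| ≤ 1) (hx : |x| < 1) :
    qSeries q a x - qSeries q a (q * x) = x * qSeries q (fun n => a (n + 1)) x := by
  have hqx : |q * x| < 1 := by simpa [mul_comm] using abs_mul_pow_lt_one hq hx 1
  have hsx := summable_qSeries hq ha hx
  have hsqx := summable_qSeries hq ha hqx
  rw [qSeries, qSeries, ← hsx.tsum_sub hsqx, (hsx.sub hsqx).tsum_eq_zero_add, qSeries,
    ← tsum_mul_left]
  simp only [pow_zero, mul_one, sub_self, zero_add]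
  refine tsum_congr fun n => ?_
  have h1 := (one_sub_pow_succ_pos hq n).ne'
  have h2 := (qPoch_pos hq n).ne'
  rw [qPoch_succ, mul_pow]
  field_simp
  ring

noncomputable def qExp (q x : ℝ) : ℝ := qSeries q (fun _ => 1) x

noncomputable def qExpInvCoeff (q : ℝ) (n : ℕ) : ℝ := (-1) ^ n * q ^ n.choose 2

noncomputable def qExpInv (q x : ℝ) : ℝ := qSeries q (qExpInvCoeff q) x

lemma abs_qExpInvCoeff_le (hq : |q| < 1) (n : ℕ) : |qExpInvCoeff q n| ≤ 1 := by
  rw [qExpInvCoeff, abs_mul, abs_pow, abs_pow, abs_neg, abs_one, one_pow, one_mul]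
  exact pow_le_one₀ (abs_nonneg q) hq.le

lemma qExpInvCoeff_succ (n : ℕ) : qExpInvCoeff q (n + 1) = -(qExpInvCoeff q n * q ^ n) := by
  rw [qExpInvCoeff, qExpInvCoeff, Nat.choose_succ_succ', Nat.choose_one_right, pow_add]
  ring

lemma tendsto_qExp_nhds_zero (hq : |q| < 1) : Tendsto (qExp q) (𝓝 0) (𝓝 1) :=
  tendsto_qSeries_nhds_zero hq fun _ => by simp

lemma tendsto_qExpInv_nhds_zero (hq : |q| < 1) : Tendsto (qExpInv q) (𝓝 0) (𝓝 1) := by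
  have : Tendsto (qExpInv q) (𝓝 0) (𝓝 (qExpInvCoeff q 0)) :=
    tendsto_qSeries_nhds_zero hq (abs_qExpInvCoeff_le hq)
  simpa [qExpInvCoeff] using this

lemma qExp_q_mul (hq : |q| < 1) (hx : |x| < 1) : qExp q (q * x) = (1 - x) * qExp q x := by
  have := qSeries_sub_qSeries_q_mul hq (a := fun _ => 1) (fun _ => by simp) hx
  rw [← qExp, ← qExp] at this
  linarith

lemma qExpInv_eq_one_sub_mul (hq : |q| < 1) (hx : |x| < 1) :
    qExpInv q x = (1 - x) * qExpInv q (q * x) := by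
  have hshift : qSeries q (fun n => qExpInvCoeff q (n + 1)) x = -qExpInv q (q * x) := by
    rw [qExpInv, qSeries, qSeries, ← tsum_neg]
    refine tsum_congr fun n => ?_
    rw [qExpInvCoeff_succ, mul_pow]
    ring
  have := qSeries_sub_qSeries_q_mul hq (abs_qExpInvCoeff_le hq) hx
  rw [← qExpInv, ← qExpInv, hshift] at this
  linarith

lemma tendsto_mul_pow_atTop (hq : |q| < 1) (x : ℝ) :
    Tendsto (fun k : ℕ => x * q ^ k) atTop (𝓝 0) := by
  simpa using (tendsto_pow_atTop_nhds_zero_of_abs_lt_one hq).const_mul x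

theorem qExp_mul_qExpInv (hq : |q| < 1) (hx : |x| < 1) : qExp q x * qExpInv q x = 1 := by
  have hinv : ∀ k : ℕ, qExp q (x * q ^ k) * qExpInv q (x * q ^ k) = qExp q x * qExpInv q x := by
    intro k
    induction k with
    | zero => simp
    | succ k ih =>
      have hk := abs_mul_pow_lt_one hq hx k
      rw [← ih, qExpInv_eq_one_sub_mul hq hk,
        show x * q ^ (k + 1) = q * (x * q ^ k) by ring, qExp_q_mul hq hk]
      ring
  have hlim := ((tendsto_qExp_nhds_zero hq).mul (tendsto_qExpInv_nhds_zero hq)).comp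
    (tendsto_mul_pow_atTop hq x)
  simp only [mul_one, Function.comp_def, hinv] at hlim
  exact tendsto_nhds_unique tendsto_const_nhds hlim

theorem qExpInv_eq_prod_mul (hq : |q| < 1) (hx : |x| < 1) (k : ℕ) :
    qExpInv q x = (∏ j ∈ range k, (1 - x * q ^ j)) * qExpInv q (x * q ^ k) := by
  induction k with
  | zero => simp
  | succ k ih =>
    rw [ih, qExpInv_eq_one_sub_mul hq (abs_mul_pow_lt_one hq hx k), prod_range_succ,
      pow_succ]
    ring_nf

theorem hasProd_qExpInv (hq : |q| < 1) (hx : |x| < 1) :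
    HasProd (fun j => 1 - x * q ^ j) (qExpInv q x) := by
  have hmul : Multipliable fun j => 1 - x * q ^ j := by
    simpa [sub_eq_add_neg] using Real.multipliable_one_add_of_summable
      ((summable_geometric_of_abs_lt_one hq).mul_left x).neg
  have hlim := hmul.hasProd.tendsto_prod_nat.mul
    ((tendsto_qExpInv_nhds_zero hq).comp (tendsto_mul_pow_atTop hq x))
  simp only [mul_one, Function.comp_def, ← qExpInv_eq_prod_mul hq hx] at hlim
  rw [tendsto_nhds_unique tendsto_const_nhds hlim]
  exact hmul.hasProd

lemma tprod_one_sub_pow_succ (hq : |q| < 1) : ∏' j : ℕ, (1 - q ^ (j + 1)) = qExpInv q q := by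
  simpa [pow_succ'] using (hasProd_qExpInv hq hq).tprod_eq

lemma qExpInv_eq_qPoch_mul (hq : |q| < 1) (k : ℕ) :
    qExpInv q q = qPoch q k * qExpInv q (q ^ (k + 1)) := by
  simpa [qPoch, pow_succ'] using qExpInv_eq_prod_mul hq hq k

lemma qExpInvCoeff_mul_pow (m : ℕ) :
    qExpInvCoeff q m * q ^ m = (-1) ^ m * q ^ (m * (m + 1) / 2) := by
  rw [qExpInvCoeff, mul_assoc, ← pow_add, Nat.choose_two_right, ← Nat.triangle_succ,
    Nat.add_sub_cancel, Nat.mul_comm (m + 1)]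

lemma summable_uncurry_of_abs_le (hq : |q| < 1) {f : ℕ → ℕ → ℝ} {C : ℝ}
    (hf : ∀ k m, |f k m| ≤ C * (|q| ^ k * |q| ^ m)) : Summable (Function.uncurry f) := by
  have hgeom := summable_geometric_of_lt_one (abs_nonneg q) hq
  exact ((hgeom.mul_of_nonneg hgeom (fun _ => by positivity) fun _ => by positivity).mul_left C
    ).of_norm_bounded fun p => hf p.1 p.2

noncomputable def falseThetaTerm (q : ℝ) (k m : ℕ) : ℝ :=
  qExpInv q q * (q ^ k / qPoch q k) * (qExpInvCoeff q m * (q ^ (k + 1)) ^ m / qPoch q m)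

lemma summable_falseThetaTerm (hq : |q| < 1) : Summable (Function.uncurry (falseThetaTerm q)) := by
  obtain ⟨C, hC0, hC⟩ := exists_inv_qPoch_le hq
  refine summable_uncurry_of_abs_le hq (C := |qExpInv q q| * C * C) fun k m => ?_
  have hleft : |q ^ k / qPoch q k| ≤ C * |q| ^ k := by
    simpa using abs_mul_pow_div_qPoch_le hq hC abs_one.le k (x := q)
  have hright := abs_mul_pow_div_qPoch_le hq hC (abs_qExpInvCoeff_le hq m) m (x := q ^ (k + 1))
  have hpow : |q ^ (k + 1)| ^ m ≤ |q| ^ m := by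
    refine pow_le_pow_left₀ (abs_nonneg _) ?_ m
    rw [abs_pow]
    exact pow_le_of_le_one (abs_nonneg q) hq.le k.succ_ne_zero
  calc |falseThetaTerm q k m|
      ≤ |qExpInv q q| * (C * |q| ^ k) * (C * |q ^ (k + 1)| ^ m) := by
        rw [falseThetaTerm, abs_mul, abs_mul]; gcongr
    _ ≤ |qExpInv q q| * (C * |q| ^ k) * (C * |q| ^ m) := by gcongr
    _ = |qExpInv q q| * C * C * (|q| ^ k * |q| ^ m) := by ring

lemma tsum_falseThetaTerm_right (hq : |q| < 1) (k : ℕ) :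
    ∑' m, falseThetaTerm q k m = qExpInv q q ^ 2 * (q ^ k / qPoch q k ^ 2) := by
  simp only [falseThetaTerm]
  rw [tsum_mul_left, ← qSeries, ← qExpInv, qExpInv_eq_qPoch_mul hq k]
  field_simp [(qPoch_pos hq k).ne']

lemma tsum_falseThetaTerm_left (hq : |q| < 1) (m : ℕ) :
    ∑' k, falseThetaTerm q k m = (-1) ^ m * q ^ (m * (m + 1) / 2) := by
  have hterm (k : ℕ) : falseThetaTerm q k m = qExpInvCoeff q m * q ^ m / qPoch q m *
      qExpInv q q * (1 * (q ^ (m + 1)) ^ k / qPoch q k) := by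
    rw [falseThetaTerm]; ring
  have hinv := qExp_mul_qExpInv hq (x := q ^ (m + 1))
    (by simpa [pow_succ'] using abs_mul_pow_lt_one hq hq m)
  rw [tsum_congr hterm, tsum_mul_left, ← qSeries, ← qExp, qExpInv_eq_qPoch_mul hq m,
    ← qExpInvCoeff_mul_pow]
  field_simp [(qPoch_pos hq m).ne']
  linear_combination (qExpInvCoeff q m * q ^ m) * hinv

end

theorem false_theta_eq' (q : ℝ) (hq : |q| < 1) :
    (∑' k : ℕ, (-1 : ℝ) ^ k * q ^ (k * (k + 1) / 2))
      = (∏' j : ℕ, (1 - q ^ (j + 1))) ^ 2 * ∑' k : ℕ, q ^ k / (qPoch q k) ^ 2 := by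
  calc ∑' m : ℕ, (-1 : ℝ) ^ m * q ^ (m * (m + 1) / 2)
      = ∑' m, ∑' k, falseThetaTerm q k m := by simp only [tsum_falseThetaTerm_left hq]
    _ = ∑' k, ∑' m, falseThetaTerm q k m := (summable_falseThetaTerm hq).tsum_comm
    _ = _ := by
      rw [tprod_one_sub_pow_succ hq, ← tsum_mul_left]
      simp only [tsum_falseThetaTerm_right hq]
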